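/- Let r and r' be roots of a λ-graph. Then ⟦r⟧ = ⟦r'⟧ holds if and only if, for every trace τ: (1) there is a path from r with trace τ if and only if there is a path from r' with trace τ; and (2) whenever there are paths from r and from r' both with trace τ, the readbacks along these two paths are equal. -/
import Mathlib


/-- Directions for paths in a λ-graph. -/
inductive Dir : Type where
  | left | body | right
deriving DecidableEq

/-- Labels of nodes of a (pre–)λ-graph. -/
inductive NodeLabel (Node Name : Type) : Type where
  | app (l r : Node)
  | abs (body : Node)
  | fvar (name : Name)
  | bvar (binder : Node)

/-- The four kinds of nodes. -/
inductive NodeKind : Type where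
  | app | abs | fvar | bvar
deriving DecidableEq

/-- The kind of a node label. -/
def NodeLabel.kind {Node Name : Type} : NodeLabel Node Name → NodeKind
  | .app _ _ => .app
  | .abs _ => .abs
  | .fvar _ => .fvar
  | .bvar _ => .bvar

/-- Locally nameless λ-terms. -/
inductive Term (Name : Type) : Type where
  | bvar (i : ℕ)
  | fvar (a : Name)
  | app (t s : Term Name)
  | lam (t : Term Name)

/-- Reflexive–symmetric–transitive closure `R*` of a relation. -/
inductive RstClosure {α : Type _} (R : α → α → Prop) : α → α → Prop where
  | base {a b : α} : R a b → RstClosure R a b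
  | refl (a : α) : RstClosure R a a
  | symm {a b : α} : RstClosure R a b → RstClosure R b a
  | trans {a b c : α} : RstClosure R a b → RstClosure R b c → RstClosure R a c

/-- A pre–λ-graph: every node carries a label; the binder of a bound variable node is an
abstraction node; the name of a free variable node uniquely identifies it. -/
structure PreLamGraph (Node Name : Type) : Type where
  label : Node → NodeLabel Node Name
  binder_abs : ∀ n l, label n = .bvar l → ∃ b, label l = .abs b
  fvar_inj : ∀ n m a, label n = .fvar a → label m = .fvar a → n = m

namespace PreLamGraph

variable {Node Name : Type}

/-- `Path G τ n m`: there is a path from `n` to `m` with trace `τ`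
(binding edges are never followed). -/
inductive Path (G : PreLamGraph Node Name) : List Dir → Node → Node → Prop where
  | nil (n : Node) : Path G [] n n
  | abs {τ : List Dir} {n m b : Node} :
      Path G τ n m → G.label m = .abs b → Path G (.body :: τ) n b
  | appL {τ : List Dir} {n m l r : Node} :
      Path G τ n m → G.label m = .app l r → Path G (.left :: τ) n l
  | appR {τ : List Dir} {n m l r : Node} :
      Path G τ n m → G.label m = .app l r → Path G (.right :: τ) n r

/-- `r` is a root: the only path ending at `r` is the empty path from `r` itself. -/
def Root (G : PreLamGraph Node Name) (r : Node) : Prop :=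
  ∀ (τ : List Dir) (n : Node), G.Path τ n r → τ = []

/-- `Crosses G τ n p`: the path from `n` with trace `τ` crosses the node `p`. -/
inductive Crosses (G : PreLamGraph Node Name) : List Dir → Node → Node → Prop where
  | here {τ : List Dir} {n p : Node} : G.Path τ n p → Crosses G τ n p
  | step {d : Dir} {τ : List Dir} {n p m : Node} :
      Crosses G τ n p → G.Path (d :: τ) n m → Crosses G (d :: τ) n p

/-- `m` dominates `n`: every path from a root to `n` crosses `m`. -/
def Dominates (G : PreLamGraph Node Name) (m n : Node) : Prop :=
  ∀ (r : Node) (τ : List Dir), G.Root r → G.Path τ r n → G.Crosses τ r m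

/-- Acyclicity: a path from a node to itself must have empty trace. -/
def Acyclic (G : PreLamGraph Node Name) : Prop :=
  ∀ (n : Node) (τ : List Dir), G.Path τ n n → τ = []

/-- Every bound variable node is dominated by its binder. -/
def Dominated (G : PreLamGraph Node Name) : Prop :=
  ∀ (n l : Node), G.label n = .bvar l → G.Dominates l n

/-- A query relates only root nodes. -/
def IsQuery (G : PreLamGraph Node Name) (Q : Node → Node → Prop) : Prop :=
  ∀ n m, Q n m → G.Root n ∧ G.Root m

/-- A relation is homogeneous if it only relates nodes of the same kind. -/
def Homogeneous (G : PreLamGraph Node Name) (R : Node → Node → Prop) : Prop :=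
  ∀ n m, R n m → (G.label n).kind = (G.label m).kind

/-- Closure under the left propagation rule. -/
def ClosedAppL (G : PreLamGraph Node Name) (R : Node → Node → Prop) : Prop :=
  ∀ n m n1 n2 m1 m2, G.label n = .app n1 n2 → G.label m = .app m1 m2 → R n m → R n1 m1

/-- Closure under the right propagation rule. -/
def ClosedAppR (G : PreLamGraph Node Name) (R : Node → Node → Prop) : Prop :=
  ∀ n m n1 n2 m1 m2, G.label n = .app n1 n2 → G.label m = .app m1 m2 → R n m → R n2 m2

/-- Closure under the body propagation rule. -/
def ClosedAbs (G : PreLamGraph Node Name) (R : Node → Node → Prop) : Prop :=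
  ∀ n m n' m', G.label n = .abs n' → G.label m = .abs m' → R n m → R n' m'

/-- Closure under the scoping rule. -/
def ClosedScope (G : PreLamGraph Node Name) (R : Node → Node → Prop) : Prop :=
  ∀ n m l l', G.label n = .bvar l → G.label m = .bvar l' → R n m → R l l'

/-- Closure under the three propagation rules. -/
def ClosedProp (G : PreLamGraph Node Name) (R : Node → Node → Prop) : Prop :=
  G.ClosedAppL R ∧ G.ClosedAppR R ∧ G.ClosedAbs R

/-- A blind bisimulation is a homogeneous relation closed under the propagation rules. -/
def BlindBisimulation (G : PreLamGraph Node Name) (R : Node → Node → Prop) : Prop :=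
  G.Homogeneous R ∧ G.ClosedProp R

/-- A bisimulation is a homogeneous relation closed under the propagation rules
and the scoping rule. -/
def Bisimulation (G : PreLamGraph Node Name) (R : Node → Node → Prop) : Prop :=
  G.BlindBisimulation R ∧ G.ClosedScope R

/-- A relation is open if whenever it relates two free variable nodes they are equal. -/
def OpenRel (G : PreLamGraph Node Name) (R : Node → Node → Prop) : Prop :=
  ∀ n m a b, G.label n = .fvar a → G.label m = .fvar b → R n m → n = m

/-- A sharing equivalence is an open bisimulation that is also an equivalence relation. -/
def SharingEquivalence (G : PreLamGraph Node Name) (R : Node → Node → Prop) : Prop :=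
  G.OpenRel R ∧ G.Bisimulation R ∧ Equivalence R

/-- A blind sharing equivalence is an equivalence relation that is a blind bisimulation. -/
def BlindSharingEquivalence (G : PreLamGraph Node Name) (R : Node → Node → Prop) : Prop :=
  Equivalence R ∧ G.BlindBisimulation R

/-- The propagation `R↓`: the smallest relation containing `R` and closed under the
propagation rules. -/
inductive Propagation (G : PreLamGraph Node Name) (R : Node → Node → Prop) :
    Node → Node → Prop where
  | base {n m : Node} : R n m → Propagation G R n m
  | appL {n m n1 n2 m1 m2 : Node} :
      Propagation G R n m → G.label n = .app n1 n2 → G.label m = .app m1 m2 →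
      Propagation G R n1 m1
  | appR {n m n1 n2 m1 m2 : Node} :
      Propagation G R n m → G.label n = .app n1 n2 → G.label m = .app m1 m2 →
      Propagation G R n2 m2
  | abs {n m n' m' : Node} :
      Propagation G R n m → G.label n = .abs n' → G.label m = .abs m' →
      Propagation G R n' m'

/-- The spreading `R⇓`: the smallest equivalence relation containing `R` and closed
under the propagation rules. -/
inductive Spreading (G : PreLamGraph Node Name) (R : Node → Node → Prop) :
    Node → Node → Prop where
  | base {n m : Node} : R n m → Spreading G R n m
  | refl (n : Node) : Spreading G R n n
  | symm {n m : Node} : Spreading G R n m → Spreading G R m n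
  | trans {n m p : Node} : Spreading G R n m → Spreading G R m p → Spreading G R n p
  | appL {n m n1 n2 m1 m2 : Node} :
      Spreading G R n m → G.label n = .app n1 n2 → G.label m = .app m1 m2 →
      Spreading G R n1 m1
  | appR {n m n1 n2 m1 m2 : Node} :
      Spreading G R n m → G.label n = .app n1 n2 → G.label m = .app m1 m2 →
      Spreading G R n2 m2
  | abs {n m n' m' : Node} :
      Spreading G R n m → G.label n = .abs n' → G.label m = .abs m' →
      Spreading G R n' m'

/-- `IndexOf G l n τ k`: the de Bruijn index of the abstraction node `l` along the path
from `n` with trace `τ` (which crosses `l`) is `k`. -/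
inductive IndexOf (G : PreLamGraph Node Name) (l n : Node) : List Dir → ℕ → Prop where
  | here {τ : List Dir} : G.Path τ n l → IndexOf G l n τ 0
  | abs {d : Dir} {τ : List Dir} {m b : Node} {k : ℕ} :
      G.Path (d :: τ) n m → G.label m = .abs b → m ≠ l →
      IndexOf G l n τ k → IndexOf G l n (d :: τ) (k + 1)
  | other {d : Dir} {τ : List Dir} {m : Node} {k : ℕ} :
      G.Path (d :: τ) n m → (∀ b, G.label m ≠ .abs b) →
      IndexOf G l n τ k → IndexOf G l n (d :: τ) k

/-- `Readback G r τ t`: the readback of the endpoint of the access path from `r` with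
trace `τ` is the locally nameless term `t`. -/
inductive Readback (G : PreLamGraph Node Name) (r : Node) : List Dir → Term Name → Prop where
  | bvar {τ : List Dir} {n l : Node} {k : ℕ} :
      G.Path τ r n → G.label n = .bvar l → G.IndexOf l r τ k →
      Readback G r τ (.bvar k)
  | fvar {τ : List Dir} {n : Node} {a : Name} :
      G.Path τ r n → G.label n = .fvar a → Readback G r τ (.fvar a)
  | abs {τ : List Dir} {n b : Node} {t : Term Name} :
      G.Path τ r n → G.label n = .abs b → Readback G r (.body :: τ) t →
      Readback G r τ (.lam t)
  | app {τ : List Dir} {n n1 n2 : Node} {t1 t2 : Term Name} :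
      G.Path τ r n → G.label n = .app n1 n2 →
      Readback G r (.left :: τ) t1 → Readback G r (.right :: τ) t2 →
      Readback G r τ (.app t1 t2)

end PreLamGraph

/-- A λ-graph: a finite, acyclic and dominated pre–λ-graph. -/
structure LamGraph (Node Name : Type) extends PreLamGraph Node Name where
  finite : Finite Node
  acyclic : toPreLamGraph.Acyclic
  dominated : toPreLamGraph.Dominated
namespace PreLamGraph

variable {Node Name : Type}

theorem path_det {G : PreLamGraph Node Name} :
    ∀ {τ : List Dir} {n m m' : Node}, G.Path τ n m → G.Path τ n m' → m = m' := by
  intro τ n m m' p1 p2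
  induction p1 generalizing m' with
  | nil => cases p2; rfl
  | abs p hl ih =>
    cases p2 with
    | abs p' hl' => obtain rfl := ih p'; rw [hl] at hl'; cases hl'; rfl
  | appL p hl ih =>
    cases p2 with
    | appL p' hl' => obtain rfl := ih p'; rw [hl] at hl'; cases hl'; rfl
  | appR p hl ih =>
    cases p2 with
    | appR p' hl' => obtain rfl := ih p'; rw [hl] at hl'; cases hl'; rfl

theorem readback_path {G : PreLamGraph Node Name} {r : Node} {τ : List Dir} {t : Term Name}
    (h : G.Readback r τ t) : ∃ n, G.Path τ r n := by
  cases h with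
  | bvar p _ _ => exact ⟨_, p⟩
  | fvar p _ => exact ⟨_, p⟩
  | abs p _ _ => exact ⟨_, p⟩
  | app p _ _ _ => exact ⟨_, p⟩

theorem ext_body {G : PreLamGraph Node Name} {r : Node} {τ : List Dir} {m n : Node}
    (q : G.Path (.body :: τ) r m) (p : G.Path τ r n) : ∃ b, G.label n = .abs b := by
  cases q with
  | abs q2 hl2 => obtain rfl := path_det q2 p; exact ⟨_, hl2⟩

theorem ext_left {G : PreLamGraph Node Name} {r : Node} {τ : List Dir} {m n : Node}
    (q : G.Path (.left :: τ) r m) (p : G.Path τ r n) : ∃ a b, G.label n = .app a b := by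
  cases q with
  | appL q2 hl2 => obtain rfl := path_det q2 p; exact ⟨_, _, hl2⟩

theorem ext_right {G : PreLamGraph Node Name} {r : Node} {τ : List Dir} {m n : Node}
    (q : G.Path (.right :: τ) r m) (p : G.Path τ r n) : ∃ a b, G.label n = .app a b := by
  cases q with
  | appR q2 hl2 => obtain rfl := path_det q2 p; exact ⟨_, _, hl2⟩

theorem key {G : PreLamGraph Node Name} {r r' : Node} {t0 : Term Name}
    (h : G.Readback r [] t0) (h' : G.Readback r' [] t0) :
    ∀ τ : List Dir, ((¬∃ n, G.Path τ r n) ∧ (¬∃ n, G.Path τ r' n)) ∨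
      (∃ t, G.Readback r τ t ∧ G.Readback r' τ t) := by
  intro τ
  induction τ with
  | nil => exact Or.inr ⟨t0, h, h'⟩
  | cons d τ ih =>
    rcases ih with ⟨hn, hn'⟩ | ⟨t, ht, ht'⟩
    · left
      refine ⟨?_, ?_⟩
      · rintro ⟨n, p⟩
        cases p with
        | abs q _ => exact hn ⟨_, q⟩
        | appL q _ => exact hn ⟨_, q⟩
        | appR q _ => exact hn ⟨_, q⟩
      · rintro ⟨n, p⟩
        cases p with
        | abs q _ => exact hn' ⟨_, q⟩
        | appL q _ => exact hn' ⟨_, q⟩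
        | appR q _ => exact hn' ⟨_, q⟩
    · cases ht with
      | bvar p hl _ =>
        cases ht' with
        | bvar p' hl' _ =>
          left
          refine ⟨?_, ?_⟩ <;> rintro ⟨m, q⟩ <;> cases d
          · obtain ⟨a, b, e⟩ := ext_left q p; rw [hl] at e; cases e
          · obtain ⟨b, e⟩ := ext_body q p; rw [hl] at e; cases e
          · obtain ⟨a, b, e⟩ := ext_right q p; rw [hl] at e; cases e
          · obtain ⟨a, b, e⟩ := ext_left q p'; rw [hl'] at e; cases e
          · obtain ⟨b, e⟩ := ext_body q p'; rw [hl'] at e; cases e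
          · obtain ⟨a, b, e⟩ := ext_right q p'; rw [hl'] at e; cases e
      | fvar p hl =>
        cases ht' with
        | fvar p' hl' =>
          left
          refine ⟨?_, ?_⟩ <;> rintro ⟨m, q⟩ <;> cases d
          · obtain ⟨a, b, e⟩ := ext_left q p; rw [hl] at e; cases e
          · obtain ⟨b, e⟩ := ext_body q p; rw [hl] at e; cases e
          · obtain ⟨a, b, e⟩ := ext_right q p; rw [hl] at e; cases e
          · obtain ⟨a, b, e⟩ := ext_left q p'; rw [hl'] at e; cases e
          · obtain ⟨b, e⟩ := ext_body q p'; rw [hl'] at e; cases e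
          · obtain ⟨a, b, e⟩ := ext_right q p'; rw [hl'] at e; cases e
      | abs p hl hb =>
        cases ht' with
        | abs p' hl' hb' =>
          cases d with
          | body => exact Or.inr ⟨_, hb, hb'⟩
          | left =>
            left
            refine ⟨?_, ?_⟩ <;> rintro ⟨m, q⟩
            · obtain ⟨a, b, e⟩ := ext_left q p; rw [hl] at e; cases e
            · obtain ⟨a, b, e⟩ := ext_left q p'; rw [hl'] at e; cases e
          | right =>
            left
            refine ⟨?_, ?_⟩ <;> rintro ⟨m, q⟩
            · obtain ⟨a, b, e⟩ := ext_right q p; rw [hl] at e; cases e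
            · obtain ⟨a, b, e⟩ := ext_right q p'; rw [hl'] at e; cases e
      | app p hl hL hR =>
        cases ht' with
        | app p' hl' hL' hR' =>
          cases d with
          | left => exact Or.inr ⟨_, hL, hL'⟩
          | right => exact Or.inr ⟨_, hR, hR'⟩
          | body =>
            left
            refine ⟨?_, ?_⟩ <;> rintro ⟨m, q⟩
            · obtain ⟨b, e⟩ := ext_body q p; rw [hl] at e; cases e
            · obtain ⟨b, e⟩ := ext_body q p'; rw [hl'] at e; cases e

end PreLamGraph

open PreLamGraph in
/-- equality of readbacks of two roots, decomposed along traces. -/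
theorem readback_eq_iff_traces {Node Name : Type} (G : LamGraph Node Name)
    (r r' : Node) (h1 : G.toPreLamGraph.Root r) (h2 : G.toPreLamGraph.Root r') :
    (∃ t : Term Name, Readback G.toPreLamGraph r [] t ∧
        Readback G.toPreLamGraph r' [] t) ↔
      ∀ τ : List Dir,
        ((∃ n, Path G.toPreLamGraph τ r n) ↔ (∃ n, Path G.toPreLamGraph τ r' n)) ∧
        ((∃ n, Path G.toPreLamGraph τ r n) → (∃ n, Path G.toPreLamGraph τ r' n) →
          ∃ t : Term Name, Readback G.toPreLamGraph r τ t ∧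
            Readback G.toPreLamGraph r' τ t) := by
  constructor
  · rintro ⟨t0, h, h'⟩ τ
    rcases key h h' τ with ⟨hn, hn'⟩ | ⟨t, ht, ht'⟩
    · exact ⟨⟨fun hp => absurd hp hn, fun hp => absurd hp hn'⟩,
        fun hp _ => absurd hp hn⟩
    · exact ⟨⟨fun _ => readback_path ht', fun _ => readback_path ht⟩,
        fun _ _ => ⟨t, ht, ht'⟩⟩
  · intro H
    exact (H []).2 ⟨r, .nil r⟩ ⟨r', .nil r'⟩
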